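/- Let J be the 1D discrete Schrödinger operator on ℓ²(ℤ) with bounded potential d. If Im(d(n)) → 0 as n → +∞ and there exists m ∈ ℤ with Im(d(m)) ≠ 0 and Im(d(m+1)) ≠ 0, then J has no eigenvalues on the boundary of its numerical range. -/

import Mathlib

open scoped InnerProductSpace

/-- The action of the 1D discrete Schrödinger operator
`(J u)(n) = u(n−1) + d(n) u(n) + u(n+1)`. -/
noncomputable def Jact1 (d : ℤ → ℂ) (u : ℤ → ℂ) (n : ℤ) : ℂ :=
  u (n - 1) + d n * u n + u (n + 1)

/-- The numerical range of the 1D operator `J`. -/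
noncomputable def numRangeJ1 (d : ℤ → ℂ) : Set ℂ :=
  {z | ∃ u v : lp (fun _ : ℤ => ℂ) 2, ‖u‖ = 1 ∧
    (∀ n, v n = Jact1 d (fun m => u m) n) ∧ ⟪u, v⟫_ℂ = z}

/-!
Let `J u = λ u` with `u ≠ 0` and `λ` on the boundary of the numerical range. Perturbing `u`
to `u + t w`, the Rayleigh quotient moves to first order by `t ⟪u, (J - λ) w⟫ / ‖u‖²`: the
`conj t` terms cancel because `(J - λ) u = 0`. If this derivative were nonzero, the inverse
function theorem would put `λ` in the interior; hence `⟪u, (J - λ) w⟫ = 0` for all `w`, i.e.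
`J* u = conj λ u`. Subtracting the two eigenvalue equations gives `(Im d(n) - Im λ) u(n) = 0`, so
`u` vanishes at two consecutive sites (at `m, m + 1` if `λ` is real, far to the right otherwise),
and the three-term recurrence forces `u = 0`.
-/

open scoped ComplexConjugate
open Filter Topology

section NumRange

variable {E : Type*} [NormedAddCommGroup E] [InnerProductSpace ℂ E]

/-- The numerical range of a linear relation, e.g. the graph of an unbounded operator. -/
def numRange (G : Submodule ℂ (E × E)) : Set ℂ :=
  {z | ∃ p ∈ G, ‖p.1‖ = 1 ∧ ⟪p.1, p.2⟫_ℂ = z}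

lemma inner_div_inner_self_mem_numRange {G : Submodule ℂ (E × E)} {p : E × E}
    (hp : p ∈ G) (h : p.1 ≠ 0) : ⟪p.1, p.2⟫_ℂ / ⟪p.1, p.1⟫_ℂ ∈ numRange G := by
  refine ⟨((‖p.1‖⁻¹ : ℝ) : ℂ) • p, G.smul_mem _ hp, ?_, ?_⟩
  · simp [norm_smul, h]
  · simp only [Prod.smul_fst, Prod.smul_snd, inner_smul_left, inner_smul_right,
      Complex.ofReal_inv, map_inv₀, Complex.conj_ofReal, inner_self_eq_norm_sq_to_K,
      Complex.coe_algebraMap]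
    field_simp

lemma mem_interior_of_hasStrictFDerivAt {f : ℂ → ℂ} {s : Set ℂ} {a t₀ : ℂ} (ha : a ≠ 0)
    (hf : HasStrictFDerivAt f (a • ContinuousLinearMap.id ℝ ℂ) t₀)
    (hs : ∀ᶠ t in 𝓝 t₀, f t ∈ s) : f t₀ ∈ interior s := by
  let e : ℂ ≃L[ℝ] ℂ :=
    (ContinuousLinearEquiv.unitsEquivAut ℂ (Units.mk0 a ha)).restrictScalars ℝ
  have he : HasStrictFDerivAt f (e : ℂ →L[ℝ] ℂ) t₀ :=
    hf.congr_fderiv (ContinuousLinearMap.ext fun t => by simp [e, mul_comm])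
  rw [mem_interior_iff_mem_nhds, ← he.map_nhds_eq_of_equiv]
  exact hs

variable [NormedSpace ℝ E] [IsScalarTower ℝ ℂ E]

lemma hasStrictFDerivAt_rayleigh_perturb {u : E} (hu : u ≠ 0) (w z : E) (lam : ℂ) :
    HasStrictFDerivAt
      (fun t : ℂ => ⟪u + t • w, lam • u + t • z⟫_ℂ / ⟪u + t • w, u + t • w⟫_ℂ)
      (((⟪u, z⟫_ℂ - lam * ⟪u, w⟫_ℂ) / ⟪u, u⟫_ℂ) • ContinuousLinearMap.id ℝ ℂ) 0 := by
  have hline : ∀ a b : E, HasStrictFDerivAt (fun t : ℂ => a + t • b)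
      ((ContinuousLinearMap.id ℝ ℂ).smulRight b) 0 := fun a b =>
    ((hasStrictFDerivAt_id 0).smul_const b).const_add a
  have huu : ⟪u, u⟫_ℂ ≠ 0 := inner_self_ne_zero.2 hu
  have hM := (hasStrictFDerivAt_inv' (𝕜 := ℝ) (by simpa using huu)).comp 0
    ((hline u w).inner ℂ (hline u w))
  refine (((hline u w).inner ℂ (hline (lam • u) z)).mul hM).congr_fderiv ?_
  ext t
  simp only [zero_smul, add_zero, ContinuousLinearMap.neg_comp, smul_neg,
    add_apply, neg_apply, smul_apply,
    ContinuousLinearMap.comp_apply, ContinuousLinearMap.prod_apply,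
    ContinuousLinearMap.smulRight_apply, ContinuousLinearMap.id_apply, fderivInnerCLM_apply,
    ContinuousLinearMap.mulLeftRight_apply, inner_smul_left, inner_smul_right, smul_eq_mul]
  field_simp
  ring

theorem inner_snd_eq_of_mem_frontier_numRange {G : Submodule ℂ (E × E)} {u : E} {lam : ℂ}
    (hu : u ≠ 0) (heig : (u, lam • u) ∈ G) (hlam : lam ∈ frontier (numRange G))
    {p : E × E} (hp : p ∈ G) : ⟪u, p.2⟫_ℂ = lam * ⟪u, p.1⟫_ℂ := by
  by_contra hne
  have huu : ⟪u, u⟫_ℂ ≠ 0 := inner_self_ne_zero.2 hu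
  have hnear : ∀ᶠ t : ℂ in 𝓝 0, u + t • p.1 ≠ 0 :=
    ContinuousAt.eventually_ne (by fun_prop) (by simpa using hu)
  have hint := mem_interior_of_hasStrictFDerivAt (div_ne_zero (sub_ne_zero.2 hne) huu)
    (hasStrictFDerivAt_rayleigh_perturb hu p.1 p.2 lam) (s := numRange G) <| by
      filter_upwards [hnear] with t ht
      exact inner_div_inner_self_mem_numRange (p := (u + t • p.1, lam • u + t • p.2))
        (G.add_mem heig (G.smul_mem t hp)) ht
  simp only [zero_smul, add_zero, inner_smul_right, mul_div_assoc, div_self huu, mul_one] at hint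
  exact hlam.2 hint

end NumRange

local notation "ℓ²" => lp (fun _ : ℤ => ℂ) 2

def jacobiGraph (d : ℤ → ℂ) : Submodule ℂ (ℓ² × ℓ²) where
  carrier := {p | ∀ n, p.2 n = Jact1 d (fun k => p.1 k) n}
  add_mem' {p q} hp hq n := by
    simp only [Prod.snd_add, Prod.fst_add, lp.coeFn_add, Pi.add_apply, hp n, hq n, Jact1] at *
    ring
  zero_mem' n := by simp [Jact1]
  smul_mem' c p hp n := by
    simp only [Prod.smul_snd, Prod.smul_fst, lp.coeFn_smul, Pi.smul_apply, smul_eq_mul, hp n,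
      Jact1] at *
    ring

lemma numRangeJ1_eq_numRange (d : ℤ → ℂ) : numRangeJ1 d = numRange (jacobiGraph d) := by
  ext z
  constructor
  · rintro ⟨u, v, hu, hv, rfl⟩
    exact ⟨(u, v), hv, hu, rfl⟩
  · rintro ⟨⟨u, v⟩, hv, hu, rfl⟩
    exact ⟨u, v, hu, hv, rfl⟩

lemma single_mem_jacobiGraph (d : ℤ → ℂ) (n : ℤ) :
    (lp.single 2 n 1, lp.single 2 (n - 1) 1 + d n • lp.single 2 n 1 + lp.single 2 (n + 1) 1)
      ∈ jacobiGraph d := by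
  intro k
  simp only [Jact1, lp.coeFn_add, lp.coeFn_smul, Pi.add_apply, Pi.smul_apply, lp.single_apply,
    Pi.single_apply, smul_eq_mul]
  split_ifs <;> first | omega | (subst_vars; simp)

lemma eq_zero_of_jacobi_eigen_of_consecutive_zeros {d : ℤ → ℂ} {lam : ℂ} {u : ℤ → ℂ}
    (heig : ∀ n, Jact1 d u n = lam * u n) {n₀ : ℤ} (h₀ : u n₀ = 0) (h₁ : u (n₀ + 1) = 0) :
    u = 0 := by
  have up : ∀ n, n₀ ≤ n → u n = 0 ∧ u (n + 1) = 0 := by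
    intro n hn
    induction n, hn using Int.leInduction with
    | base => exact ⟨h₀, h₁⟩
    | succ n _ ih =>
      have h := heig (n + 1)
      simp only [Jact1, add_sub_cancel_right, ih.1, ih.2] at h
      exact ⟨ih.2, by simpa using h⟩
  have down : ∀ n, n ≤ n₀ → u n = 0 ∧ u (n + 1) = 0 := by
    intro n hn
    induction n, hn using Int.leInductionDown with
    | base => exact ⟨h₀, h₁⟩
    | pred n _ ih =>
      have h := heig n
      simp only [Jact1, ih.1, ih.2] at h
      exact ⟨by simpa using h, by simpa using ih.1⟩
  funext n
  rcases le_total n₀ n with h | h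
  exacts [(up n h).1, (down n h).1]

lemma eigenvector_apply_eq_zero_of_im_ne {d : ℤ → ℂ} {lam : ℂ} {u : ℓ²} (hu : u ≠ 0)
    (heig : ∀ n, Jact1 d (fun k => u k) n = lam * u n)
    (hlam : lam ∈ frontier (numRangeJ1 d)) {n : ℤ} (hn : (d n).im ≠ lam.im) : u n = 0 := by
  have hadj := inner_snd_eq_of_mem_frontier_numRange hu (p := _) (G := jacobiGraph d)
    (fun k => by simp [heig k]) (numRangeJ1_eq_numRange d ▸ hlam) (single_mem_jacobiGraph d n)
  simp only [inner_add_right, inner_smul_right, lp.inner_single_right, RCLike.inner_apply,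
    one_mul] at hadj
  have hadj' := congrArg conj hadj
  simp only [map_add, map_mul, Complex.conj_conj] at hadj'
  have h := heig n
  simp only [Jact1] at h
  have key : (d n - conj (d n)) * u n = (lam - conj lam) * u n := by linear_combination h - hadj'
  rw [Complex.sub_conj, Complex.sub_conj] at key
  have hprod : (((d n).im - lam.im : ℝ) : ℂ) * (2 * Complex.I) * u n = 0 := by
    push_cast at key ⊢
    linear_combination key
  have hne : (((d n).im - lam.im : ℝ) : ℂ) ≠ 0 := by exact_mod_cast sub_ne_zero.2 hn
  exact (mul_eq_zero.1 hprod).resolve_left (mul_ne_zero hne (by simp))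

theorem stmt16_general (d : ℤ → ℂ)
    (hlim : Filter.Tendsto (fun n : ℤ => (d n).im) Filter.atTop (nhds 0))
    (m : ℤ) (hm : (d m).im ≠ 0) (hm1 : (d (m + 1)).im ≠ 0) :
    ¬ ∃ (lam : ℂ) (u : lp (fun _ : ℤ => ℂ) 2), u ≠ 0 ∧
        (∀ n, Jact1 d (fun k => u k) n = lam * u n) ∧
        lam ∈ frontier (numRangeJ1 d) := by
  rintro ⟨lam, u, hu, heig, hlam⟩
  have hzero {n : ℤ} : (d n).im ≠ lam.im → u n = 0 :=
    eigenvector_apply_eq_zero_of_im_ne hu heig hlam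
  obtain ⟨n₀, h₀, h₁⟩ : ∃ n₀, u n₀ = 0 ∧ u (n₀ + 1) = 0 := by
    by_cases hreal : lam.im = 0
    · exact ⟨m, hzero (hreal ▸ hm), hzero (hreal ▸ hm1)⟩
    · obtain ⟨N, hN⟩ := eventually_atTop.1 (hlim.eventually_ne (Ne.symm hreal))
      exact ⟨N, hzero (hN N le_rfl), hzero (hN (N + 1) (by omega))⟩
  exact hu <| lp.ext <|
    (eq_zero_of_jacobi_eigen_of_consecutive_zeros heig h₀ h₁).trans (lp.coeFn_zero ..).symm

/-- If `Im(d n) → 0` as `n → +∞` and there is an `m` with `Im(d m) ≠ 0` and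
`Im(d (m+1)) ≠ 0`, then `J` has no eigenvalue on the boundary of its numerical
range. -/
theorem stmt16 (d : ℤ → ℂ) (hd : ∃ C, ∀ n, ‖d n‖ ≤ C)
    (hlim : Filter.Tendsto (fun n : ℤ => (d n).im) Filter.atTop (nhds 0))
    (m : ℤ) (hm : (d m).im ≠ 0) (hm1 : (d (m + 1)).im ≠ 0) :
    ¬ ∃ (lam : ℂ) (u : lp (fun _ : ℤ => ℂ) 2), u ≠ 0 ∧
        (∀ n, Jact1 d (fun k => u k) n = lam * u n) ∧
        lam ∈ frontier (numRangeJ1 d) :=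
  stmt16_general d hlim m hm hm1
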